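/- Let G, H₁, H₂ be additive commutative groups, and let η₁ : G →+ H₁ and η₂ : G →+ H₂ be additive group homomorphisms such that the kernel of η₁ is contained in the kernel of η₂. Let M be an m×k matrix with entries in AddMonoidAlgebra (ZMod 2) G, and for i = 1,2 let M(ηᵢ) be the entrywise image of M under AddMonoidAlgebra.mapDomainRingHom ηᵢ. Then for every natural number n and every pair of injective maps r : Fin n → Fin m, c : Fin n → Fin k, if det (M(η₂).submatrix r c) ≠ 0 then det (M(η₁).submatrix r c) ≠ 0. Consequently, the largest size of a square submatrix of M(η₂) with nonvanishing determinant is at most the largest such size for M(η₁). -/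

import Mathlib

/-!
Since `ker η₁ ≤ ker η₂`, the map `η₂` factors through `η₁` as a map of sets, hence so does the
induced map of group algebras: `mapDomain η₂ = mapDomain ψ ∘ mapDomain η₁` with
`ψ = extend η₁ η₂ _`. Ring homomorphisms commute with determinants, so every minor of `M(η₂)` is
the image of the corresponding minor of `M(η₁)` under `mapDomain ψ`, and it vanishes whenever the
latter does.
-/

open Function

theorem AddMonoidHom.factorsThrough_of_ker_le {G H₁ H₂ : Type*}
    [AddGroup G] [AddGroup H₁] [AddGroup H₂] {η₁ : G →+ H₁} {η₂ : G →+ H₂}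
    (h : η₁.ker ≤ η₂.ker) : FactorsThrough η₂ η₁ := fun a b hab ↦ by
  have : a - b ∈ η₂.ker := h (by rw [mem_ker, map_sub, hab, sub_self])
  rwa [mem_ker, map_sub, sub_eq_zero] at this

namespace AddMonoidAlgebra

variable {R α β γ : Type*} [Semiring R]

theorem mapDomain_comp (f : α → β) (g : β → γ) (x : AddMonoidAlgebra R α) :
    mapDomain (g ∘ f) x = mapDomain g (mapDomain f x) := by
  ext
  simp [Finsupp.mapDomain_comp]

theorem mapDomain_eq_zero_of_factorsThrough {f : α → β} {g : α → γ} (h : FactorsThrough g f)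
    {x : AddMonoidAlgebra R α} (hx : mapDomain f x = 0) : mapDomain g x = 0 := by
  rcases isEmpty_or_nonempty α with _ | ⟨⟨a⟩⟩
  · rw [show x = 0 by ext i; exact isEmptyElim i, mapDomain_zero]
  · rw [← h.extend_comp fun _ ↦ g a, mapDomain_comp, hx, mapDomain_zero]

end AddMonoidAlgebra

theorem Matrix.det_submatrix_map {R S m k n : Type*} [CommRing R] [CommRing S]
    [Fintype n] [DecidableEq n] (f : R →+* S) (M : Matrix m k R) (r : n → m) (c : n → k) :
    ((M.map f).submatrix r c).det = f (M.submatrix r c).det := by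
  rw [RingHom.map_det, RingHom.mapMatrix_apply, submatrix_map]

theorem minor_nonzero_mono_of_ker_le {G H₁ H₂ : Type*}
    [AddCommGroup G] [AddCommGroup H₁] [AddCommGroup H₂]
    (η₁ : G →+ H₁) (η₂ : G →+ H₂)
    (hker : ∀ g : G, η₁ g = 0 → η₂ g = 0)
    {m k : ℕ} (M : Matrix (Fin m) (Fin k) (AddMonoidAlgebra (ZMod 2) G)) :
    (∀ (n : ℕ) (r : Fin n → Fin m) (c : Fin n → Fin k),
        Function.Injective r → Function.Injective c →
        ((M.map (AddMonoidAlgebra.mapDomainRingHom (ZMod 2) η₂)).submatrix r c).det ≠ 0 →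
        ((M.map (AddMonoidAlgebra.mapDomainRingHom (ZMod 2) η₁)).submatrix r c).det ≠ 0)
    ∧
    ∀ n : ℕ,
      (∃ (r : Fin n → Fin m) (c : Fin n → Fin k),
          Function.Injective r ∧ Function.Injective c ∧
          ((M.map (AddMonoidAlgebra.mapDomainRingHom (ZMod 2) η₂)).submatrix r c).det ≠ 0) →
      (∃ (r : Fin n → Fin m) (c : Fin n → Fin k),
          Function.Injective r ∧ Function.Injective c ∧
          ((M.map (AddMonoidAlgebra.mapDomainRingHom (ZMod 2) η₁)).submatrix r c).det ≠ 0) := by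
  have hfactor : FactorsThrough η₂ η₁ := AddMonoidHom.factorsThrough_of_ker_le hker
  have minor_mono : ∀ (n : ℕ) (r : Fin n → Fin m) (c : Fin n → Fin k),
      ((M.map (AddMonoidAlgebra.mapDomainRingHom (ZMod 2) η₂)).submatrix r c).det ≠ 0 →
      ((M.map (AddMonoidAlgebra.mapDomainRingHom (ZMod 2) η₁)).submatrix r c).det ≠ 0 := by
    intro n r c h₂ h₁
    rw [Matrix.det_submatrix_map] at h₁ h₂
    exact h₂ (AddMonoidAlgebra.mapDomain_eq_zero_of_factorsThrough hfactor h₁)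
  exact ⟨fun n r c _ _ ↦ minor_mono n r c,
    fun n ⟨r, c, hr, hc, h⟩ ↦ ⟨r, c, hr, hc, minor_mono n r c h⟩⟩
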